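/- Let n ≥ 1, 1 ≤ m ≤ n, and consider the polynomial p(z) = 1 − m^{m/2}·z_1 z_2 ⋯ z_m. If α ≤ (2n + 1 − m)/2, then p is cyclic in D_α(B_n); that is, for every ε > 0 there exists a polynomial q ∈ ℂ[z_1,…,z_n] with ‖q·p − 1‖_α < ε. -/

import Mathlib

open MeasureTheory
open scoped ENNReal Classical

noncomputable section

/-- The ambient space `ℂⁿ` with the Euclidean norm; the unit ball `𝔹ₙ` is
`Metric.ball (0 : En n) 1` and the unit sphere `𝕊ₙ` is `Metric.sphere (0 : En n) 1`. -/
abbrev En (n : ℕ) := EuclideanSpace ℂ (Fin n)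

/-- Lebesgue measure on `ℂⁿ`, transported along the definitional equality
`EuclideanSpace ℂ (Fin n) = (Fin n → ℂ)`. -/
noncomputable instance (n : ℕ) : MeasureSpace (En n) :=
  ⟨Measure.map (MeasurableEquiv.toLp 2 (Fin n → ℂ)) volume⟩

/-- `|k| = k₁ + … + kₙ` for a multi-index `k`. -/
def mOrd {n : ℕ} (k : Fin n → ℕ) : ℕ := ∑ i, k i

/-- `k! = k₁! ⋯ kₙ!` for a multi-index `k`. -/
def mFact {n : ℕ} (k : Fin n → ℕ) : ℕ := ∏ i, (k i).factorial

/-- `z^k = z₁^{k₁} ⋯ zₙ^{kₙ}` for a multi-index `k`. -/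
def mPow {n : ℕ} (z : En n) (k : Fin n → ℕ) : ℂ := ∏ i, z i ^ k i

/-- The weight `(n+|k|)^α · (n-1)!·k! / (n-1+|k|)!` appearing in the Dirichlet-type norm. -/
def dWeight (n : ℕ) (α : ℝ) (k : Fin n → ℕ) : ℝ :=
  ((n : ℝ) + mOrd k) ^ α * (((n - 1).factorial * mFact k : ℕ) : ℝ) /
    (((n - 1 + mOrd k).factorial : ℕ) : ℝ)

/-- The squared Dirichlet-type norm `‖·‖²_α` of a family of Taylor coefficients,
valued in `[0,∞]`. -/
def Dnorm2 (n : ℕ) (α : ℝ) (a : (Fin n → ℕ) → ℂ) : ℝ≥0∞ :=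
  ∑' k : Fin n → ℕ, ENNReal.ofReal (dWeight n α k * ‖a k‖ ^ 2)

/-- `a` is the family of power-series (Taylor) coefficients of `f` on the unit ball:
`f z = Σ_k a_k z^k` for every `z` in the ball. -/
def HasCoeffs (n : ℕ) (f : En n → ℂ) (a : (Fin n → ℕ) → ℂ) : Prop :=
  ∀ z ∈ Metric.ball (0 : En n) 1, HasSum (fun k => a k * mPow z k) (f z)

/-- The squared Dirichlet-type norm `‖f‖²_α` of a function, computed through its
power-series coefficients (which are unique when they exist). -/
def DnormF2 (n : ℕ) (α : ℝ) (f : En n → ℂ) : ℝ≥0∞ :=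
  sInf {x | ∃ a, HasCoeffs n f a ∧ x = Dnorm2 n α a}

/-- Membership in the Dirichlet-type space `D_α(𝔹ₙ)`. -/
def MemD (n : ℕ) (α : ℝ) (f : En n → ℂ) : Prop :=
  DifferentiableOn ℂ f (Metric.ball 0 1) ∧ ∃ a, HasCoeffs n f a ∧ Dnorm2 n α a < ⊤

/-- `f` is a cyclic vector of `D_α(𝔹ₙ)`: for every `ε > 0` there is a polynomial `q`
with `‖q·f - 1‖²_α < ε`. -/
def CyclicD (n : ℕ) (α : ℝ) (f : En n → ℂ) : Prop :=
  ∀ ε : ℝ, 0 < ε → ∃ q : MvPolynomial (Fin n) ℂ,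
    DnormF2 n α (fun z => MvPolynomial.eval (fun i => z i) q * f z - 1) < ENNReal.ofReal ε

/-- The model polynomial `p(z) = 1 - m^{m/2}·z₁ z₂ ⋯ z_m`, as a function on `ℂⁿ`. -/
def modelP (n m : ℕ) (hmn : m ≤ n) : En n → ℂ :=
  fun z => 1 - ((((m : ℝ) ^ ((m : ℝ) / 2) : ℝ)) : ℂ) * ∏ i : Fin m, z (Fin.castLE hmn i)

/-!
Write `w = z₁ ⋯ z_m`, `c = m^{m/2}` and `p = 1 - c w`. For coefficients `b₀ = 1, b₁, …, b_N = 0`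
the polynomial `q = ∑ b_j (c w)^j` gives, by telescoping,
`q p - 1 = ∑_{j<N} (b_{j+1} - b_j) (c w)^{j+1}`, whose Taylor coefficients sit on the diagonal
multi-indices `(j, …, j, 0, …, 0)`. By Stirling's formula `‖(c w)^j‖²_α = O(j)` exactly when
`α ≤ (2n+1-m)/2`, so `‖q p - 1‖²_α ≲ ∑ j (b_{j+1} - b_j)²`, and the logarithmic cutoff
`b_j = 1 - log (j+1) / log (N+1)` makes this `O(1 / log N)`.
-/

open Finset Real Filter Topology
open scoped Nat

@[to_additive]
lemma Fin.prod_ite_val_lt {β : Type*} [CommMonoid β] {n m : ℕ} (hmn : m ≤ n) (g : Fin n → β) :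
    ∏ i : Fin n, (if (i : ℕ) < m then g i else 1) = ∏ i : Fin m, g (Fin.castLE hmn i) := by
  have himage : univ.filter (fun i : Fin n => (i : ℕ) < m) = univ.image (Fin.castLE hmn) := by
    ext i
    simpa using ⟨fun hi => ⟨⟨i, hi⟩, rfl⟩, by rintro ⟨j, rfl⟩; exact j.isLt⟩
  rw [← prod_filter, himage, prod_image (Fin.castLE_injective hmn).injOn]

def diagIndex (n m j : ℕ) : Fin n → ℕ := fun i => if (i : ℕ) < m then j else 0

section diagIndex
variable {n m : ℕ}

lemma mOrd_diagIndex (hmn : m ≤ n) (j : ℕ) : mOrd (diagIndex n m j) = m * j := by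
  simp [mOrd, diagIndex, Fin.sum_ite_val_lt hmn (fun _ => j)]

lemma mFact_diagIndex (hmn : m ≤ n) (j : ℕ) : mFact (diagIndex n m j) = j ! ^ m := by
  simp [mFact, diagIndex, apply_ite Nat.factorial, Fin.prod_ite_val_lt hmn]

lemma mPow_diagIndex (hmn : m ≤ n) (z : En n) (j : ℕ) :
    mPow z (diagIndex n m j) = (∏ i : Fin m, z (Fin.castLE hmn i)) ^ j := by
  simp [mPow, diagIndex, pow_ite, Fin.prod_ite_val_lt hmn (fun i => z i ^ j), prod_pow]

lemma diagIndex_injective (hm : m ≠ 0) (hmn : m ≤ n) : Function.Injective (diagIndex n m) :=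
  have hm : 0 < m := Nat.pos_of_ne_zero hm
  fun j₁ j₂ h => by simpa [diagIndex, hm] using congrFun h ⟨0, hm.trans_le hmn⟩

end diagIndex

lemma dWeight_nonneg (n : ℕ) (α : ℝ) (k : Fin n → ℕ) : 0 ≤ dWeight n α k := by
  unfold dWeight; positivity

lemma DnormF2_le_of_eq_sum {n : ℕ} {ι : Type*} {κ : ι → Fin n → ℕ} (hκ : Function.Injective κ)
    (α : ℝ) (s : Finset ι) (e : ι → ℂ) {f : En n → ℂ}
    (hf : ∀ z ∈ Metric.ball (0 : En n) 1, f z = ∑ j ∈ s, e j * mPow z (κ j)) :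
    DnormF2 n α f ≤ ENNReal.ofReal (∑ j ∈ s, dWeight n α (κ j) * ‖e j‖ ^ 2) := by
  set e' : ι → ℂ := fun j => if j ∈ s then e j else 0
  set a := Function.extend κ e' 0
  have ha_apply : ∀ j, a (κ j) = e' j := hκ.extend_apply _ _
  have ha_range : ∀ k ∉ Set.range κ, a k = 0 := fun k hk => by
    simp [a, Function.extend_apply' _ _ _ (by simpa using hk)]
  have ha_supp : Function.support (fun k => ENNReal.ofReal (dWeight n α k * ‖a k‖ ^ 2))
      ⊆ Set.range κ := Function.support_subset_iff'.2 fun k hk => by simp [ha_range k hk]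
  have hcoeffs : HasCoeffs n f a := by
    intro z hz
    have hsum : f z = ∑ j ∈ s, e' j * mPow z (κ j) := by
      rw [hf z hz]; exact sum_congr rfl fun j hj => by simp [e', hj]
    rw [← hκ.hasSum_iff (fun k hk => by simp [ha_range k hk]), hsum]
    have hcomp : (fun k => a k * mPow z k) ∘ κ = fun j => e' j * mPow z (κ j) :=
      funext fun j => by simp [ha_apply]
    rw [hcomp]
    exact hasSum_sum_of_ne_finset_zero fun j hj => by simp [e', hj]
  have hle : DnormF2 n α f ≤ Dnorm2 n α a := sInf_le ⟨a, hcoeffs, rfl⟩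
  refine hle.trans_eq ?_
  rw [Dnorm2, ← hκ.tsum_eq ha_supp, tsum_eq_sum (s := s)
    (fun j hj => by simp [ha_apply, e', hj]), ENNReal.ofReal_sum_of_nonneg
    (fun j _ => mul_nonneg (dWeight_nonneg n α _) (sq_nonneg _))]
  exact sum_congr rfl fun j hj => by simp [ha_apply, e', hj]

lemma sum_range_succ_mul_one_sub {R : Type*} [CommRing R] (b : ℕ → R) (x : R) (N : ℕ) :
    (∑ j ∈ range (N + 1), b j * x ^ j) * (1 - x)
      = b 0 - b N * x ^ (N + 1) + ∑ j ∈ range N, (b (j + 1) - b j) * x ^ (j + 1) := by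
  induction N with
  | zero => rw [sum_range_one, sum_range_zero]; ring
  | succ N ih => rw [sum_range_succ, add_mul, ih, sum_range_succ (n := N)]; ring

lemma factorial_le_stirling {k : ℕ} (hk : k ≠ 0) : (k ! : ℝ) ≤ exp 1 * √k * (k / exp 1) ^ k := by
  obtain ⟨l, rfl⟩ := Nat.exists_eq_add_of_le' (Nat.one_le_iff_ne_zero.2 hk)
  have h := Stirling.stirlingSeq'_antitone (Nat.zero_le l)
  simp only [Function.comp, Stirling.stirlingSeq_one] at h
  rw [Stirling.stirlingSeq, div_le_iff₀ (by positivity)] at h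
  refine h.trans_eq ?_
  rw [Real.sqrt_mul zero_le_two]
  field_simp

-- `(m j)! / (j!)^m` is the central multinomial coefficient, of size `m^{m j} / j^{(m-1)/2}`.
lemma factorial_pow_mul_pow_le {m j : ℕ} (hm : m ≠ 0) (hj : j ≠ 0) :
    (j ! : ℝ) ^ m * m ^ (m * j) ≤ exp 1 ^ m / √(2 * π * m) * √j ^ (m - 1) * (m * j)! := by
  obtain ⟨m, rfl⟩ := Nat.exists_eq_add_of_le' (Nat.one_le_iff_ne_zero.2 hm)
  calc (j ! : ℝ) ^ (m + 1) * ((m + 1 : ℕ) : ℝ) ^ ((m + 1) * j)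
      ≤ (exp 1 * √j * (j / exp 1) ^ j) ^ (m + 1) * ((m + 1 : ℕ) : ℝ) ^ ((m + 1) * j) := by
        gcongr; exact factorial_le_stirling hj
    _ = exp 1 ^ (m + 1) / √(2 * π * (m + 1 : ℕ)) * √j ^ m *
          (√(2 * π * ((m + 1) * j : ℕ)) * (((m + 1) * j : ℕ) / exp 1) ^ ((m + 1) * j)) := by
        have hsqrt : √(2 * π * ((m + 1) * j : ℕ)) = √(2 * π * (m + 1 : ℕ)) * √j := by
          rw [← Real.sqrt_mul (by positivity)]; push_cast; ring_nf
        have hbase : (((m + 1) * j : ℕ) : ℝ) / exp 1 = (m + 1 : ℕ) * (j / exp 1) := by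
          push_cast; ring
        rw [hsqrt, hbase, mul_pow, mul_comm (m + 1) j, pow_mul, pow_mul]
        field_simp
        ring
    _ ≤ exp 1 ^ (m + 1) / √(2 * π * (m + 1 : ℕ)) * √j ^ (m + 1 - 1) * ((m + 1) * j)! := by
        rw [Nat.add_sub_cancel]
        gcongr
        exact Stirling.le_factorial_stirling _

lemma sqrt_pow_mul_sqrt_pow_le {n m j : ℕ} (hm : m ≠ 0) (hmn : m ≤ n) (hj : j ≠ 0) :
    √((n : ℝ) + (m * j : ℕ)) ^ (2 * n + 1 - m) * √j ^ (m - 1)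
      ≤ (n + m) * n ^ (n - 1) * j * ((m * j : ℕ) + 1 : ℝ) ^ (n - 1) := by
  set D : ℝ := n + (m * j : ℕ)
  have hj1 : (1 : ℝ) ≤ j := by exact_mod_cast Nat.one_le_iff_ne_zero.2 hj
  have hn1 : (1 : ℝ) ≤ n := by exact_mod_cast (Nat.one_le_iff_ne_zero.2 hm).trans hmn
  have hjD : (j : ℝ) ≤ D := by
    have : j ≤ m * j := Nat.le_mul_of_pos_left j (Nat.pos_of_ne_zero hm)
    have : (j : ℝ) ≤ (m * j : ℕ) := by exact_mod_cast this
    linarith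
  have hD_le_j : D ≤ (n + m) * j := by simp only [D]; push_cast; nlinarith
  have hD_le_M : D ≤ n * ((m * j : ℕ) + 1) := by simp only [D]; nlinarith
  calc √D ^ (2 * n + 1 - m) * √j ^ (m - 1)
      ≤ √D ^ (2 * n + 1 - m) * √D ^ (m - 1) := by gcongr
    _ = D * D ^ (n - 1) := by
        rw [← pow_add, show 2 * n + 1 - m + (m - 1) = 2 * (n - 1) + 2 by omega, pow_add,
          pow_mul, Real.sq_sqrt (by positivity)]
        ring
    _ ≤ ((n + m) * j) * (n * ((m * j : ℕ) + 1)) ^ (n - 1) := by gcongr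
    _ = (n + m) * n ^ (n - 1) * j * ((m * j : ℕ) + 1 : ℝ) ^ (n - 1) := by rw [mul_pow]; ring

lemma dWeight_diagIndex_mul_le {n m : ℕ} (hm : m ≠ 0) (hmn : m ≤ n) {α : ℝ}
    (hα : α ≤ (2 * (n : ℝ) + 1 - m) / 2) {j : ℕ} (hj : j ≠ 0) :
    dWeight n α (diagIndex n m j) * m ^ (m * j)
      ≤ (n - 1)! * (exp 1 ^ m / √(2 * π * m)) * (n + m) * n ^ (n - 1) * j := by
  set M := m * j
  set D : ℝ := n + (M : ℕ)
  set K : ℝ := exp 1 ^ m / √(2 * π * m)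
  have hD : 1 ≤ D := by
    have : (1 : ℝ) ≤ n := by exact_mod_cast (Nat.one_le_iff_ne_zero.2 hm).trans hmn
    simp only [D]; linarith [(Nat.cast_nonneg M : (0 : ℝ) ≤ M)]
  have hpow : D ^ α ≤ √D ^ (2 * n + 1 - m) := by
    calc D ^ α ≤ D ^ ((2 * n + 1 - m : ℕ) / 2 : ℝ) := by
          refine Real.rpow_le_rpow_of_exponent_le hD (hα.trans_eq ?_)
          rw [Nat.cast_sub (by omega)]; push_cast; ring
      _ = √D ^ (2 * n + 1 - m) := by
          rw [Real.sqrt_eq_rpow, ← Real.rpow_natCast, ← Real.rpow_mul (by positivity)]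
          ring_nf
  have hfact : (M ! : ℝ) * ((M : ℕ) + 1 : ℝ) ^ (n - 1) ≤ (n - 1 + M)! := by
    rw [add_comm (n - 1)]; exact_mod_cast Nat.factorial_mul_pow_le_factorial
  unfold dWeight
  rw [mOrd_diagIndex hmn, mFact_diagIndex hmn, div_mul_eq_mul_div, div_le_iff₀ (by positivity),
    Nat.cast_mul ((n - 1)!), Nat.cast_pow]
  calc D ^ α * ((n - 1)! * (j ! : ℝ) ^ m) * (m : ℝ) ^ M
      = (n - 1)! * D ^ α * ((j ! : ℝ) ^ m * (m : ℝ) ^ M) := by ring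
    _ ≤ (n - 1)! * √D ^ (2 * n + 1 - m) * (K * √j ^ (m - 1) * M !) :=
        mul_le_mul (mul_le_mul_of_nonneg_left hpow (by positivity))
          (factorial_pow_mul_pow_le hm hj) (by positivity) (by positivity)
    _ = (n - 1)! * K * M ! * (√D ^ (2 * n + 1 - m) * √j ^ (m - 1)) := by ring
    _ ≤ (n - 1)! * K * M ! * ((n + m) * n ^ (n - 1) * j * ((M : ℕ) + 1 : ℝ) ^ (n - 1)) :=
        mul_le_mul_of_nonneg_left (sqrt_pow_mul_sqrt_pow_le hm hmn hj) (by positivity)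
    _ = (n - 1)! * K * (n + m) * n ^ (n - 1) * j * (M ! * ((M : ℕ) + 1 : ℝ) ^ (n - 1)) := by ring
    _ ≤ (n - 1)! * K * (n + m) * n ^ (n - 1) * j * (n - 1 + M)! := by gcongr

lemma sq_rpow_self_div_two (m : ℕ) : ((m : ℝ) ^ ((m : ℝ) / 2)) ^ 2 = (m : ℝ) ^ m := by
  rw [← Real.rpow_natCast, ← Real.rpow_mul (Nat.cast_nonneg m), Nat.cast_ofNat,
    div_mul_cancel₀ _ two_ne_zero, Real.rpow_natCast]

lemma exists_DnormF2_mul_modelP_sub_one_le {n m : ℕ} (hm : m ≠ 0) (hmn : m ≤ n) (α : ℝ)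
    (b : ℕ → ℝ) {N : ℕ} (hb0 : b 0 = 1) (hbN : b N = 0) :
    ∃ q : MvPolynomial (Fin n) ℂ,
      DnormF2 n α (fun z => MvPolynomial.eval (fun i => z i) q * modelP n m hmn z - 1)
        ≤ ENNReal.ofReal (∑ j ∈ range N,
            dWeight n α (diagIndex n m (j + 1)) * m ^ (m * (j + 1)) * (b (j + 1) - b j) ^ 2) := by
  set c : ℝ := (m : ℝ) ^ ((m : ℝ) / 2)
  set w : MvPolynomial (Fin n) ℂ := ∏ i : Fin m, MvPolynomial.X (Fin.castLE hmn i)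
  set q : MvPolynomial (Fin n) ℂ :=
    ∑ j ∈ range (N + 1), MvPolynomial.C (b j : ℂ) * (MvPolynomial.C (c : ℂ) * w) ^ j
  refine ⟨q, (DnormF2_le_of_eq_sum (diagIndex_injective hm hmn |>.comp
    (add_left_injective 1)) α (range N) (fun j => ((b (j + 1) - b j) * c ^ (j + 1) : ℝ))
    fun z _ => ?_).trans ?_⟩
  · set x : ℂ := c * ∏ i : Fin m, z (Fin.castLE hmn i)
    have hq : MvPolynomial.eval (fun i => z i) q = ∑ j ∈ range (N + 1), (b j : ℂ) * x ^ j := by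
      simp [q, w, x]
    have hp : modelP n m hmn z = 1 - x := rfl
    rw [hq, hp, sum_range_succ_mul_one_sub, hb0, hbN]
    push_cast
    rw [zero_mul, sub_zero, add_sub_cancel_left]
    refine sum_congr rfl fun j _ => ?_
    rw [Function.comp_apply, mPow_diagIndex hmn, mul_pow]
    push_cast
    ring
  · refine ENNReal.ofReal_le_ofReal (sum_le_sum fun j _ => le_of_eq ?_)
    rw [Function.comp_apply, Complex.norm_real, Real.norm_eq_abs, sq_abs, mul_pow, ← pow_mul,
      mul_comm (j + 1) 2, pow_mul, sq_rpow_self_div_two, ← pow_mul]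
    ring

lemma log_add_one_sub_log_le {x : ℝ} (hx : 0 < x) : log (x + 1) - log x ≤ x⁻¹ := by
  rw [← Real.log_div (by positivity) hx.ne']
  calc log ((x + 1) / x) ≤ (x + 1) / x - 1 := Real.log_le_sub_one_of_pos (by positivity)
    _ = x⁻¹ := by field_simp; ring

def logCutoff (N j : ℕ) : ℝ := 1 - log (j + 1) / log (N + 1)

lemma logCutoff_zero (N : ℕ) : logCutoff N 0 = 1 := by simp [logCutoff]

lemma logCutoff_self {N : ℕ} (hN : N ≠ 0) : logCutoff N N = 0 := by
  have : log ((N : ℝ) + 1) ≠ 0 := (Real.log_pos (by norm_cast; omega)).ne'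
  simp [logCutoff, div_self this]

lemma sq_logCutoff_succ_sub_le (N j : ℕ) :
    (logCutoff N (j + 1) - logCutoff N j) ^ 2 ≤ ((j + 1 : ℝ)⁻¹) ^ 2 / log (N + 1) ^ 2 := by
  have hj : (0 : ℝ) < j + 1 := by positivity
  have hdiff : logCutoff N (j + 1) - logCutoff N j
      = -((log (j + 1 + 1) - log (j + 1)) / log (N + 1)) := by
    simp only [logCutoff]; push_cast; ring
  rw [hdiff, neg_sq, div_pow]
  gcongr
  · exact sub_nonneg.2 (Real.log_le_log hj (by linarith))
  · exact log_add_one_sub_log_le hj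

lemma sum_mul_sq_logCutoff_succ_sub_le {N : ℕ} (hN : 2 ≤ N) {C : ℝ} (hC : 0 ≤ C) :
    ∑ j ∈ range N, C * (j + 1) * (logCutoff N (j + 1) - logCutoff N j) ^ 2
      ≤ 2 * C / log (N + 1) := by
  set L := log ((N : ℝ) + 1)
  have hL : 1 ≤ L := by
    rw [Real.le_log_iff_exp_le (by positivity)]
    have : (2 : ℝ) ≤ N := by exact_mod_cast hN
    linarith [Real.exp_one_lt_d9]
  have hlogN : log N ≤ L := Real.log_le_log (by positivity) (by linarith)
  have hharm : ∑ j ∈ range N, ((j : ℝ) + 1)⁻¹ ≤ 1 + log N := by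
    have := harmonic_le_one_add_log N
    simp only [harmonic, Rat.cast_sum, Rat.cast_inv, Rat.cast_natCast] at this
    push_cast at this
    exact this
  calc ∑ j ∈ range N, C * (j + 1) * (logCutoff N (j + 1) - logCutoff N j) ^ 2
      ≤ ∑ j ∈ range N, C * (j + 1) * (((j + 1 : ℝ)⁻¹) ^ 2 / L ^ 2) := by
        gcongr with j; exact sq_logCutoff_succ_sub_le N j
    _ = C / L ^ 2 * ∑ j ∈ range N, ((j : ℝ) + 1)⁻¹ := by
        rw [mul_sum]; exact sum_congr rfl fun j _ => by field_simp
    _ ≤ C / L ^ 2 * (2 * L) := by gcongr; linarith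
    _ = 2 * C / L := by field_simp

theorem stmt_10_general (n m : ℕ) (hm : 1 ≤ m) (hmn : m ≤ n) (α : ℝ)
    (hα : α ≤ (2 * (n : ℝ) + 1 - m) / 2) :
    CyclicD n α (modelP n m hmn) := by
  intro ε hε
  have hm0 : m ≠ 0 := Nat.one_le_iff_ne_zero.mp hm
  set C : ℝ := (n - 1)! * (exp 1 ^ m / √(2 * π * m)) * (n + m) * n ^ (n - 1)
  have hC : 0 ≤ C := by positivity
  have hlim : Tendsto (fun N : ℕ => 2 * C / log (N + 1)) atTop (𝓝 0) :=
    tendsto_const_nhds.div_atTop (Real.tendsto_log_atTop.comp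
      (tendsto_atTop_add_const_right _ 1 tendsto_natCast_atTop_atTop))
  obtain ⟨N, hNε, hN⟩ := ((hlim.eventually (gt_mem_nhds hε)).and (eventually_ge_atTop 2)).exists
  obtain ⟨q, hq⟩ := exists_DnormF2_mul_modelP_sub_one_le hm0 hmn α (logCutoff N)
    (logCutoff_zero N) (logCutoff_self (by omega))
  refine ⟨q, hq.trans_lt ((ENNReal.ofReal_lt_ofReal_iff hε).2 (lt_of_le_of_lt ?_ hNε))⟩
  refine (sum_le_sum fun j _ => ?_).trans (sum_mul_sq_logCutoff_succ_sub_le hN hC)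
  have hweight := dWeight_diagIndex_mul_le hm0 hmn hα (Nat.succ_ne_zero j)
  push_cast at hweight
  exact mul_le_mul_of_nonneg_right hweight (sq_nonneg _)

/-- the model polynomial `p(z) = 1 - m^{m/2} z₁⋯z_m` is cyclic in
`D_α(𝔹ₙ)` whenever `α ≤ (2n+1-m)/2`. -/
theorem stmt_10 (n m : ℕ) (hn : 1 ≤ n) (hm : 1 ≤ m) (hmn : m ≤ n) (α : ℝ)
    (hα : α ≤ (2 * (n : ℝ) + 1 - m) / 2) :
    CyclicD n α (modelP n m hmn) :=
  stmt_10_general n m hm hmn α hα
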